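/- arXiv:1201.4477 — 6 statements merged into one kernel-verified Lean document; each statement's English description precedes it below -/
import Mathlib

section
/- Let λ ≥ 1 be an integer and M = 2^λ. For all natural numbers k₁, k₂, l₁, l₂ with 1 ≤ k₁, k₂, l₁, l₂ ≤ M/2, k₁ ≠ k₂ and l₁ ≠ l₂, the equality sin(k₁π/M)·sin(l₂π/M) = sin(l₁π/M)·sin(k₂π/M) holds if and only if k₁ = l₁ and k₂ = l₂. (Since sin(kπ/M) > 0 for 1 ≤ k ≤ M/2, this is equivalent to: sin(k₁π/M)/sin(k₂π/M) = sin(l₁π/M)/sin(l₂π/M) iff k₁ = l₁ and k₂ = l₂.) -/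
/-!
With `θ = π / 2^(n+1)` and `m = 2^n`, the product-to-sum formula turns `sin (aθ) sin (bθ)`
into `(cos (|a - b| θ) - cos ((a + b) θ)) / 2`. Since `exp (θ i)` is a primitive `2^(n+2)`-th
root of unity of degree `2m` over `ℚ`, the numbers `cos (jθ)`, `j < m`, are linearly independent
over `ℚ`, and `cos ((2m - k) θ) = -cos (kθ)` gives every `cos (kθ)`, `k ≤ 2m`, integer
coordinates in this basis. Comparing coordinates recovers `|a - b|` and `a + b`, hence `{a, b}`.
-/

open Real Finset

theorem IsPrimitiveRoot.natDegree_minpoly_rat_of_two_pow {K : Type*} [Field K] [CharZero K]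
    {ζ : K} {n : ℕ} (hζ : IsPrimitiveRoot ζ (2 ^ (n + 1))) : (minpoly ℚ ζ).natDegree = 2 ^ n := by
  rw [← Polynomial.cyclotomic_eq_minpoly_rat hζ (by positivity), Polynomial.natDegree_cyclotomic,
    Nat.totient_prime_pow_succ Nat.prime_two]
  simp

theorem IsPrimitiveRoot.eq_zero_of_sum_intCast_mul_pow_eq_zero {K : Type*} [Field K]
    [CharZero K] {ζ : K} {n : ℕ} (hζ : IsPrimitiveRoot ζ (2 ^ (n + 1))) {g : ℕ → ℤ}
    (h : ∑ i ∈ range (2 ^ n), (g i : K) * ζ ^ i = 0) {i : ℕ} (hi : i < 2 ^ n) : g i = 0 := by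
  have hli := linearIndependent_pow (K := ℚ) ζ
  rw [hζ.natDegree_minpoly_rat_of_two_pow] at hli
  have hsum : ∑ i : Fin (2 ^ n), (g i : ℚ) • ζ ^ (i : ℕ) = 0 := by
    rw [Fin.sum_univ_eq_sum_range (fun i => (g i : ℚ) • ζ ^ i)]
    simpa [Rat.smul_def] using h
  exact_mod_cast Fintype.linearIndependent_iff.1 hli _ hsum ⟨i, hi⟩

theorem Complex.isPrimitiveRoot_exp_pi_div {N : ℕ} (hN : N ≠ 0) :
    IsPrimitiveRoot (Complex.exp ((π / N : ℝ) * Complex.I)) (2 * N) := by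
  convert Complex.isPrimitiveRoot_exp (2 * N) (by positivity) using 2
  push_cast
  field_simp

theorem Complex.two_cos_mul_exp_pow (x : ℂ) {j m : ℕ} (hj : j ≤ m) :
    2 * Complex.cos (j * x) * Complex.exp (x * Complex.I) ^ m =
      Complex.exp (x * Complex.I) ^ (m + j) + Complex.exp (x * Complex.I) ^ (m - j) := by
  have hpow : Complex.exp (j * x * Complex.I) = Complex.exp (x * Complex.I) ^ j := by
    rw [← Complex.exp_nat_mul, mul_assoc]
  rw [pow_add, pow_sub₀ _ (Complex.exp_ne_zero _) hj, Complex.two_cos, neg_mul, Complex.exp_neg,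
    hpow]
  ring

theorem eq_zero_of_sum_intCast_mul_cos_eq_zero {θ : ℝ} {n : ℕ}
    (hθ : IsPrimitiveRoot (Complex.exp (θ * Complex.I)) (2 ^ (n + 2))) {c : ℕ → ℤ}
    (h : ∑ j ∈ range (2 ^ n), (c j : ℝ) * cos (j * θ) = 0) {k : ℕ} (hk : k < 2 ^ n) :
    c k = 0 := by
  set m := 2 ^ n
  set ζ := Complex.exp (θ * Complex.I)
  -- `2 cos (jθ) ζ^m = ζ^(m+j) + ζ^(m-j)` with both exponents below `2m`, and the coefficient
  -- of `ζ^(m+k)` in the resulting combination of the basis `ζ^i`, `i < 2m`, is `c k`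
  -- (`2 c 0` if `k = 0`).
  have hpair : ∑ j ∈ range m, (c j : ℂ) * (ζ ^ (m + j) + ζ ^ (m - j)) = 0 := by
    have := congrArg (fun x : ℝ => (x : ℂ) * 2 * ζ ^ m) h
    simp only [Complex.ofReal_sum, Complex.ofReal_mul, Complex.ofReal_intCast, Complex.ofReal_cos,
      Complex.ofReal_natCast, sum_mul, zero_mul, Complex.ofReal_zero] at this
    rw [← this]
    refine sum_congr rfl fun j hj => ?_
    rw [← Complex.two_cos_mul_exp_pow _ (mem_range.1 hj).le]
    ring
  set g : ℕ → ℤ := fun i => ∑ j ∈ range m,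
    c j * ((if i = m + j then 1 else 0) + (if i = m - j then 1 else 0))
  have hg : ∑ i ∈ range (2 ^ (n + 1)), (g i : ℂ) * ζ ^ i = 0 := by
    rw [← hpair]
    simp only [g, Int.cast_sum, sum_mul]
    rw [sum_comm]
    refine sum_congr rfl fun j hj => ?_
    have hj := mem_range.1 hj
    simp only [Int.cast_mul, Int.cast_add, Int.cast_ite, Int.cast_one, Int.cast_zero, mul_assoc,
      ← mul_sum, add_mul, ite_mul, one_mul, zero_mul, sum_add_distrib, sum_ite_eq']
    rw [if_pos (mem_range.2 (by rw [pow_succ]; omega)),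
      if_pos (mem_range.2 (by rw [pow_succ]; omega))]
  have hgk :=
    hθ.eq_zero_of_sum_intCast_mul_pow_eq_zero hg (i := m + k) (by rw [pow_succ]; omega)
  simp only [g] at hgk
  rw [sum_eq_single k (fun j _ hjk => by rw [if_neg (by omega), if_neg (by omega)]; ring)
    (fun h => absurd (mem_range.2 hk) h)] at hgk
  split_ifs at hgk <;> omega

def cosCoord (m k j : ℕ) : ℤ := (if j = k then 1 else 0) - (if j + k = 2 * m then 1 else 0)

theorem cos_nat_mul_eq_sum_cosCoord {m k : ℕ} {θ : ℝ} (hθ : 2 * m * θ = π) (hk : k ≤ 2 * m) :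
    cos (k * θ) = ∑ j ∈ range m, (cosCoord m k j : ℝ) * cos (j * θ) := by
  have hrefl : ∀ j, j + k = 2 * m ↔ j = 2 * m - k := fun j => by omega
  simp only [cosCoord, hrefl, Int.cast_sub, Int.cast_ite, Int.cast_one, Int.cast_zero, sub_mul,
    ite_mul, one_mul, zero_mul, sum_sub_distrib, sum_ite_eq', mem_range]
  rcases lt_trichotomy k m with hkm | rfl | hkm
  · rw [if_pos hkm, if_neg (by omega), sub_zero]
  · rw [if_neg (lt_irrefl k), if_neg (by omega), sub_zero,
      show (k : ℝ) * θ = π / 2 by linarith, cos_pi_div_two]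
  · rw [if_neg (by omega), if_pos (by omega), zero_sub, Nat.cast_sub hk, sub_mul]
    push_cast
    rw [hθ, cos_pi_sub, neg_neg]

theorem two_mul_sin_nat_mul_mul_sin_nat_mul (x y : ℕ) (θ : ℝ) :
    2 * sin (x * θ) * sin (y * θ) = cos ((x - y : ℤ).natAbs * θ) - cos ((x + y : ℕ) * θ) := by
  rw [two_mul_sin_mul_sin, Nat.cast_natAbs, Int.cast_abs]
  push_cast
  rcases abs_choice ((x : ℝ) - y) with h | h <;> rw [h]
  · ring_nf
  · rw [← cos_neg]; ring_nf

/-- Without `d + s ≤ 2m` this fails: `(d, s)` and `(2m - s, 2m - d)` have the same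
coordinates. -/
theorem eq_and_eq_of_cosCoord_sub_eq {m d s d' s' : ℕ} (hds : d < s) (hsm : d + s ≤ 2 * m)
    (hds' : d' < s') (hsm' : d' + s' ≤ 2 * m)
    (H : ∀ j < m, cosCoord m d j - cosCoord m s j = cosCoord m d' j - cosCoord m s' j) :
    d = d' ∧ s = s' := by
  wlog hss : s ≤ s' generalizing d s d' s'
  · exact (this hds' hsm' hds hsm (fun j hj => (H j hj).symm) (by omega)).imp Eq.symm Eq.symm
  have hd := H d (by omega)
  rcases lt_trichotomy s m with hs | hs | hs
  · have h := H s hs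
    simp (disch := omega) only [cosCoord, if_neg] at h
    rcases lt_or_ge s' m with hs' | hs'
    · have h' := H s' hs'
      simp (disch := omega) only [cosCoord, if_neg] at hd h'
      split_ifs at hd h h' <;> omega
    · split_ifs at h <;> omega
  · rcases eq_or_lt_of_le hss with hs' | hs'
    · simp (disch := omega) only [cosCoord, if_neg] at hd
      split_ifs at hd <;> omega
    · have hd' := H d' (by omega)
      have h' := H (2 * m - s') (by omega)
      simp (disch := omega) only [cosCoord, if_neg] at hd' h'
      split_ifs at hd' h' <;> omega
  · have h := H (2 * m - s) (by omega)
    simp (disch := omega) only [cosCoord, if_neg] at hd h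
    split_ifs at hd h <;> omega

theorem sin_mul_sin_eq_sin_mul_sin_iff {n a b p q : ℕ}
    (ha : 1 ≤ a) (ha' : a ≤ 2 ^ n) (hb : 1 ≤ b) (hb' : b ≤ 2 ^ n)
    (hp : 1 ≤ p) (hp' : p ≤ 2 ^ n) (hq : 1 ≤ q) (hq' : q ≤ 2 ^ n) :
    sin (a * π / 2 ^ (n + 1)) * sin (b * π / 2 ^ (n + 1)) =
        sin (p * π / 2 ^ (n + 1)) * sin (q * π / 2 ^ (n + 1)) ↔
      a = p ∧ b = q ∨ a = q ∧ b = p := by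
  refine ⟨fun h => ?_, by rintro (⟨rfl, rfl⟩ | ⟨rfl, rfl⟩) <;> ring⟩
  set θ := π / 2 ^ (n + 1)
  have hθ : 2 * (2 ^ n : ℕ) * θ = π := by
    simp only [θ]; push_cast; field_simp; ring
  have hprim : IsPrimitiveRoot (Complex.exp (θ * Complex.I)) (2 ^ (n + 2)) := by
    convert Complex.isPrimitiveRoot_exp_pi_div (N := 2 ^ (n + 1)) (by positivity) using 1
    · simp [θ]
    · ring
  have hcos : cos ((a - b : ℤ).natAbs * θ) - cos ((a + b : ℕ) * θ) =
      cos ((p - q : ℤ).natAbs * θ) - cos ((p + q : ℕ) * θ) := by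
    simp only [mul_div_assoc] at h
    rw [← two_mul_sin_nat_mul_mul_sin_nat_mul, ← two_mul_sin_nat_mul_mul_sin_nat_mul,
      mul_assoc, h, mul_assoc]
  have hexpand := fun k (hk : k ≤ 2 * 2 ^ n) => cos_nat_mul_eq_sum_cosCoord hθ hk
  rw [hexpand _ (by omega), hexpand _ (by omega), hexpand _ (by omega), hexpand _ (by omega),
    ← sub_eq_zero, ← sum_sub_distrib, ← sum_sub_distrib, ← sum_sub_distrib] at hcos
  simp only [← sub_mul, ← Int.cast_sub] at hcos
  have hcoord := fun j (hj : j < 2 ^ n) =>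
    (sub_eq_zero.1 (eq_zero_of_sum_intCast_mul_cos_eq_zero hprim hcos hj)).symm
  obtain ⟨hdiff, hsum⟩ :=
    eq_and_eq_of_cosCoord_sub_eq (by omega) (by omega) (by omega) (by omega) hcoord
  omega

theorem sin_ratio_eq_iff_general (lam : ℕ) (hlam : 1 ≤ lam) (M : ℕ) (hM : M = 2 ^ lam)
    (k₁ k₂ l₁ l₂ : ℕ)
    (hk₁ : 1 ≤ k₁) (hk₁' : k₁ ≤ M / 2)
    (hk₂ : 1 ≤ k₂) (hk₂' : k₂ ≤ M / 2)
    (hl₁ : 1 ≤ l₁) (hl₁' : l₁ ≤ M / 2)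
    (hl₂ : 1 ≤ l₂) (hl₂' : l₂ ≤ M / 2)
    (hk : k₁ ≠ k₂) :
    Real.sin (k₁ * Real.pi / M) * Real.sin (l₂ * Real.pi / M) =
      Real.sin (l₁ * Real.pi / M) * Real.sin (k₂ * Real.pi / M) ↔
    k₁ = l₁ ∧ k₂ = l₂ := by
  obtain ⟨n, rfl⟩ : ∃ n, lam = n + 1 := ⟨lam - 1, by omega⟩
  have hhalf : M / 2 = 2 ^ n := by rw [hM, pow_succ, Nat.mul_div_cancel _ two_pos]
  rw [hhalf] at hk₁' hk₂' hl₁' hl₂'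
  rw [hM, Nat.cast_pow, Nat.cast_ofNat,
    sin_mul_sin_eq_sin_mul_sin_iff hk₁ hk₁' hl₂ hl₂' hl₁ hl₁' hk₂ hk₂']
  omega

theorem sin_ratio_eq_iff (lam : ℕ) (hlam : 1 ≤ lam) (M : ℕ) (hM : M = 2 ^ lam)
    (k₁ k₂ l₁ l₂ : ℕ)
    (hk₁ : 1 ≤ k₁) (hk₁' : k₁ ≤ M / 2)
    (hk₂ : 1 ≤ k₂) (hk₂' : k₂ ≤ M / 2)
    (hl₁ : 1 ≤ l₁) (hl₁' : l₁ ≤ M / 2)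
    (hl₂ : 1 ≤ l₂) (hl₂' : l₂ ≤ M / 2)
    (hk : k₁ ≠ k₂) (hl : l₁ ≠ l₂) :
    Real.sin (k₁ * Real.pi / M) * Real.sin (l₂ * Real.pi / M) =
      Real.sin (l₁ * Real.pi / M) * Real.sin (k₂ * Real.pi / M) ↔
    k₁ = l₁ ∧ k₂ = l₂ :=
  sin_ratio_eq_iff_general lam hlam M hM k₁ k₂ l₁ l₂ hk₁ hk₁' hk₂ hk₂' hl₁ hl₁' hl₂ hl₂' hk
end

section
/- Let λ ≥ 1 be an integer, M = 2^λ, and μ : ZMod M → ℂ the well-defined map μ(k) = exp(I·(2k+1)·π/M). For all k, k', l, l' ∈ ZMod M with k ≠ k', the equality μ(k) − μ(k') = μ(l) − μ(l') holds if and only if (k = l and k' = l') or (k = l' + M/2 and l = k' + M/2) in ZMod M. -/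
/-!
On the unit circle
`z⁻¹ = conj z`, so `a + b = c + d` also gives `a⁻¹ + b⁻¹ = c⁻¹ + d⁻¹`; unless `a + b = 0` this
forces `a b = c d`, and then `{a, b} = {c, d}` as the roots of one quadratic. Applied to
`μ k + μ l' = μ l + μ k'`, the first alternative is `k = l, k' = l'` (the other matching would
give `k = k'`), and `a + b = 0` is the antipodal case, as `μ (k + M/2) = -μ k`. Injectivity of
`μ` and this antipodal shift come from `μ k = ζ ω ^ k` with `ω` a primitive `M`-th root of unity.
-/

noncomputable def psk (M : ℕ) (k : ZMod M) : ℂ :=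
  Complex.exp (Complex.I * (2 * (k.val : ℂ) + 1) * (Real.pi : ℂ) / (M : ℂ))

open Complex ComplexConjugate

theorem eq_and_eq_or_eq_and_eq_of_add_eq_add_of_mul_eq_mul {R : Type*} [CommRing R] [IsDomain R]
    {a b c d : R} (hsum : a + b = c + d) (hprod : a * b = c * d) :
    (a = c ∧ b = d) ∨ (a = d ∧ b = c) := by
  have hquad : (a - c) * (a - d) = 0 := by linear_combination a * hsum - hprod
  rcases mul_eq_zero.1 hquad with hac | had
  · exact .inl ⟨by linear_combination hac, by linear_combination hsum - hac⟩
  · exact .inr ⟨by linear_combination had, by linear_combination hsum - had⟩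

theorem RCLike.mul_eq_mul_of_add_eq_add_of_norm_eq_one {𝕜 : Type*} [RCLike 𝕜] {a b c d : 𝕜}
    (ha : ‖a‖ = 1) (hb : ‖b‖ = 1) (hc : ‖c‖ = 1) (hd : ‖d‖ = 1) (hsum : a + b = c + d)
    (hsum0 : a + b ≠ 0) : a * b = c * d := by
  have hinv : a⁻¹ + b⁻¹ = c⁻¹ + d⁻¹ := by
    have := congrArg conj hsum
    rwa [map_add, map_add, ← inv_eq_conj ha, ← inv_eq_conj hb, ← inv_eq_conj hc,
      ← inv_eq_conj hd] at this
  have h0 {z : 𝕜} (hz : ‖z‖ = 1) : z ≠ 0 := norm_ne_zero_iff.1 (hz ▸ one_ne_zero)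
  rw [inv_add_inv (h0 ha) (h0 hb), inv_add_inv (h0 hc) (h0 hd), ← hsum] at hinv
  rwa [← inv_inj, inv_div, inv_div, div_left_inj' hsum0] at hinv

theorem norm_psk (M : ℕ) (k : ZMod M) : ‖psk M k‖ = 1 := by
  simp [psk, norm_exp]

theorem psk_eq_mul_pow (M : ℕ) (k : ZMod M) :
    psk M k = exp (Real.pi * I / M) * exp (2 * Real.pi * I / M) ^ k.val := by
  rw [psk, ← exp_nat_mul, ← exp_add]
  congr 1
  ring

theorem psk_injective {M : ℕ} (hM : M ≠ 0) : Function.Injective (psk M) := by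
  intro x y h
  rw [psk_eq_mul_pow, psk_eq_mul_pow, mul_right_inj' (exp_ne_zero _)] at h
  have : NeZero M := ⟨hM⟩
  exact ZMod.val_injective M ((isPrimitiveRoot_exp M hM).pow_inj x.val_lt y.val_lt h)

theorem psk_add_half {M n : ℕ} (hn : n ≠ 0) (hM : M = 2 * n) (k : ZMod M) :
    psk M (k + n) = -psk M k := by
  have hM0 : M ≠ 0 := by omega
  have : NeZero M := ⟨hM0⟩
  have hprim := isPrimitiveRoot_exp M hM0
  have hhalf : exp (2 * Real.pi * I / M) ^ n = -1 := by
    have h := hprim.pow_of_dvd hn (Dvd.intro_left 2 hM.symm)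
    rw [Nat.div_eq_of_eq_mul_left (Nat.pos_of_ne_zero hn) hM] at h
    exact h.eq_neg_one_of_two_right
  have hmod (m : ℕ) : exp (2 * Real.pi * I / M) ^ (m % M) = exp (2 * Real.pi * I / M) ^ m := by
    have h := pow_mod_orderOf (exp (2 * Real.pi * I / M)) m
    rwa [← hprim.eq_orderOf] at h
  rw [psk_eq_mul_pow, psk_eq_mul_pow, ZMod.val_add, hmod, ZMod.val_natCast, pow_add, hmod, hhalf]
  ring

theorem psk_diff_eq_diff_iff (lam : ℕ) (hlam : 1 ≤ lam) (M : ℕ) (hM : M = 2 ^ lam)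
    (k k' l l' : ZMod M) (hkk' : k ≠ k') :
    psk M k - psk M k' = psk M l - psk M l' ↔
      ((k = l ∧ k' = l') ∨
       (k = l' + ((2 ^ (lam - 1) : ℕ) : ZMod M) ∧ l = k' + ((2 ^ (lam - 1) : ℕ) : ZMod M))) := by
  have hM2 : M = 2 * 2 ^ (lam - 1) := by rw [hM, ← pow_succ', Nat.sub_add_cancel hlam]
  have hneg := psk_add_half (pow_ne_zero (lam - 1) two_ne_zero) hM2
  have hinj := psk_injective (M := M) (by rw [hM]; positivity)
  rw [sub_eq_sub_iff_add_eq_add]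
  constructor
  · intro h
    by_cases h0 : psk M k + psk M l' = 0
    · refine .inr ⟨hinj ?_, hinj ?_⟩
      · rw [hneg]; linear_combination h0
      · rw [hneg]; linear_combination h0 - h
    · rcases eq_and_eq_or_eq_and_eq_of_add_eq_add_of_mul_eq_mul h
        (RCLike.mul_eq_mul_of_add_eq_add_of_norm_eq_one (norm_psk M k) (norm_psk M l')
          (norm_psk M l) (norm_psk M k') h h0) with ⟨hkl, hl'k'⟩ | ⟨hkk'', -⟩
      · exact .inl ⟨hinj hkl, (hinj hl'k').symm⟩
      · exact absurd (hinj hkk'') hkk'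
  · rintro (⟨rfl, rfl⟩ | ⟨rfl, rfl⟩)
    · rfl
    · rw [hneg, hneg]; ring
end

section
/- Let λ ≥ 1 be an integer, M = 2^λ, n_A, n_B ≥ 1, T a type, Δx_A : Fin n_A → ℂ, Δx_B : Fin n_B → ℂ, and k_A : Fin n_A → ZMod M, k_B : Fin n_B → ZMod M. Suppose the map f : (Fin n_A → ZMod M) → (Fin n_B → ZMod M) → T removes the singular fade subspace [span(Δx_A, Δx_B)]^⊥. Define Δx̄_A i = exp(I·2π·(k_A i).val/M)·Δx_A i and Δx̄_B j = exp(I·2π·(k_B j).val/M)·Δx_B j, and define g by g a b = f (fun i => a i − k_A i) (fun j => b j − k_B j). Then g removes the singular fade subspace [span(Δx̄_A, Δx̄_B)]^⊥; moreover g satisfies the exclusive law if f does. -/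
/-- `f` removes the singular fade subspace `[span(ΔxA, ΔxB)]^⊥`: whenever the
differences of the transmitted PSK points are a common complex multiple of
`(ΔxA, ΔxB)`, the two pairs are mapped to the same value. -/
def Removes {M : ℕ} {ιA ιB T : Type*} (ΔxA : ιA → ℂ) (ΔxB : ιB → ℂ)
    (f : (ιA → ZMod M) → (ιB → ZMod M) → T) : Prop :=
  ∀ a a' : ιA → ZMod M, ∀ b b' : ιB → ZMod M,
    (∃ c : ℂ, (∀ i, psk M (a i) - psk M (a' i) = c * ΔxA i) ∧
              (∀ j, psk M (b j) - psk M (b' j) = c * ΔxB j)) →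
    f a b = f a' b'

/-- `f` satisfies the exclusive law. -/
def ExclusiveLaw {M : ℕ} {ιA ιB T : Type*}
    (f : (ιA → ZMod M) → (ιB → ZMod M) → T) : Prop :=
  (∀ a a' b, a ≠ a' → f a b ≠ f a' b) ∧ (∀ a b b', b ≠ b' → f a b ≠ f a b')

/- Writing `psk M k = exp (I π / M) · χ k` with `χ` the standard additive character of `ZMod M`,
rotating every PSK point of a user by `χ t` is the same as relabelling it by `+ t`. Hence the shifted map
sees, for the rotated direction `χ k · Δx`, exactly the PSK differences that `f` sees for `Δx`; the
exclusive law survives because `· - k` is injective. -/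

open Complex ZMod

section Shift

variable {M : ℕ} [NeZero M]

theorem stdAddChar_eq_exp (k : ZMod M) :
    stdAddChar k = exp (I * 2 * (Real.pi : ℂ) * (k.val : ℂ) / (M : ℂ)) := by
  rw [stdAddChar_apply, toCircle_apply]
  ring_nf

theorem psk_eq_exp_mul_stdAddChar (k : ZMod M) :
    psk M k = exp (I * (Real.pi : ℂ) / (M : ℂ)) * stdAddChar k := by
  rw [stdAddChar_eq_exp, psk, ← exp_add]
  ring_nf

theorem psk_add (k t : ZMod M) : psk M (k + t) = stdAddChar t * psk M k := by
  rw [psk_eq_exp_mul_stdAddChar, psk_eq_exp_mul_stdAddChar, AddChar.map_add_eq_mul]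
  ring

theorem stdAddChar_ne_zero (k : ZMod M) : stdAddChar k ≠ 0 := by
  rw [stdAddChar_apply]
  exact Circle.coe_ne_zero _

theorem psk_sub_psk_sub_eq_iff (a a' k : ZMod M) (c Δx : ℂ) :
    psk M (a - k) - psk M (a' - k) = c * Δx ↔
      psk M a - psk M a' = c * (stdAddChar k * Δx) := by
  conv_rhs => rw [← sub_add_cancel a k, ← sub_add_cancel a' k, psk_add, psk_add]
  rw [← mul_sub, mul_left_comm c, mul_right_inj' (stdAddChar_ne_zero k)]

theorem Removes.comp_sub {ιA ιB T : Type*} {ΔxA : ιA → ℂ} {ΔxB : ιB → ℂ}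
    {f : (ιA → ZMod M) → (ιB → ZMod M) → T} (hf : Removes ΔxA ΔxB f)
    (kA : ιA → ZMod M) (kB : ιB → ZMod M) :
    Removes (fun i => stdAddChar (kA i) * ΔxA i) (fun j => stdAddChar (kB j) * ΔxB j)
      (fun a b => f (a - kA) (b - kB)) := by
  rintro a a' b b' ⟨c, hA, hB⟩
  exact hf _ _ _ _ ⟨c, fun i => (psk_sub_psk_sub_eq_iff _ _ _ _ _).mpr (hA i),
    fun j => (psk_sub_psk_sub_eq_iff _ _ _ _ _).mpr (hB j)⟩

end Shift

theorem ExclusiveLaw.comp_sub {M : ℕ} {ιA ιB T : Type*} {f : (ιA → ZMod M) → (ιB → ZMod M) → T}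
    (hf : ExclusiveLaw f) (kA : ιA → ZMod M) (kB : ιB → ZMod M) :
    ExclusiveLaw (fun a b => f (a - kA) (b - kB)) :=
  ⟨fun _ _ _ h => hf.1 _ _ _ (sub_left_injective.ne h),
    fun _ _ _ h => hf.2 _ _ _ (sub_left_injective.ne h)⟩

theorem isotope_shift_removes_general (lam : ℕ) (M : ℕ) (hM : M = 2 ^ lam)
    (nA nB : ℕ)
    (T : Type*) (ΔxA : Fin nA → ℂ) (ΔxB : Fin nB → ℂ)
    (kA : Fin nA → ZMod M) (kB : Fin nB → ZMod M)
    (f : (Fin nA → ZMod M) → (Fin nB → ZMod M) → T)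
    (hf : Removes ΔxA ΔxB f) :
    Removes
      (fun i => Complex.exp (Complex.I * 2 * (Real.pi : ℂ) * ((kA i).val : ℂ) / (M : ℂ)) * ΔxA i)
      (fun j => Complex.exp (Complex.I * 2 * (Real.pi : ℂ) * ((kB j).val : ℂ) / (M : ℂ)) * ΔxB j)
      (fun (a : Fin nA → ZMod M) (b : Fin nB → ZMod M) =>
        f (fun i => a i - kA i) (fun j => b j - kB j)) ∧
    (ExclusiveLaw f →
      ExclusiveLaw (fun (a : Fin nA → ZMod M) (b : Fin nB → ZMod M) =>
        f (fun i => a i - kA i) (fun j => b j - kB j))) := by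
  have : NeZero M := ⟨by rw [hM]; positivity⟩
  simp only [← stdAddChar_eq_exp]
  exact ⟨hf.comp_sub kA kB, fun hex => hex.comp_sub kA kB⟩

theorem isotope_shift_removes (lam : ℕ) (hlam : 1 ≤ lam) (M : ℕ) (hM : M = 2 ^ lam)
    (nA nB : ℕ) (hnA : 1 ≤ nA) (hnB : 1 ≤ nB)
    (T : Type*) (ΔxA : Fin nA → ℂ) (ΔxB : Fin nB → ℂ)
    (kA : Fin nA → ZMod M) (kB : Fin nB → ZMod M)
    (f : (Fin nA → ZMod M) → (Fin nB → ZMod M) → T)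
    (hf : Removes ΔxA ΔxB f) :
    Removes
      (fun i => Complex.exp (Complex.I * 2 * (Real.pi : ℂ) * ((kA i).val : ℂ) / (M : ℂ)) * ΔxA i)
      (fun j => Complex.exp (Complex.I * 2 * (Real.pi : ℂ) * ((kB j).val : ℂ) / (M : ℂ)) * ΔxB j)
      (fun (a : Fin nA → ZMod M) (b : Fin nB → ZMod M) =>
        f (fun i => a i - kA i) (fun j => b j - kB j)) ∧
    (ExclusiveLaw f →
      ExclusiveLaw (fun (a : Fin nA → ZMod M) (b : Fin nB → ZMod M) =>
        f (fun i => a i - kA i) (fun j => b j - kB j))) :=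
  isotope_shift_removes_general lam M hM nA nB T ΔxA ΔxB kA kB f hf
end

section
/- Let λ ≥ 1 be an integer, M = 2^λ, and a, b ≥ 1. Let T, T̄ be types, Δx_A, Δx_B : Fin a → ℂ, Δx̄_A, Δx̄_B : Fin b → ℂ. Suppose f : (Fin a → ZMod M) → (Fin a → ZMod M) → T removes the singular fade subspace [span(Δx_A, Δx_B)]^⊥ and f̄ : (Fin b → ZMod M) → (Fin b → ZMod M) → T̄ removes the singular fade subspace [span(Δx̄_A, Δx̄_B)]^⊥. Define g : ((Fin a ⊕ Fin b) → ZMod M) → ((Fin a ⊕ Fin b) → ZMod M) → T × T̄ by g u v = (f (u ∘ Sum.inl) (v ∘ Sum.inl), f̄ (u ∘ Sum.inr) (v ∘ Sum.inr)). Then for every k ∈ ℂ, g removes the singular fade subspace [span(Sum.elim Δx_A (fun j => k·Δx̄_A j), Sum.elim Δx_B (fun j => k·Δx̄_B j))]^⊥; moreover g satisfies the exclusive law if both f and f̄ do. -/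
/-! The two factors of the product map read disjoint blocks of coordinates. If the PSK
differences of the product are `c` times the scaled fade vector, those of the first block are `c`
times `(ΔxA, ΔxB)` and those of the second `c * k` times `(ΔyA, ΔyB)`, so each factor identifies
its pairs. Exclusiveness is injectivity in each argument, and splitting `ι ⊕ κ → ZMod M` into
`(ι → ZMod M) × (κ → ZMod M)` is a bijection, so it passes to products. -/

open Function

section Product

variable {M : ℕ} {ιA ιB κA κB T T' : Type*}

def sumProd (f : (ιA → ZMod M) → (ιB → ZMod M) → T) (f' : (κA → ZMod M) → (κB → ZMod M) → T') :
    (ιA ⊕ κA → ZMod M) → (ιB ⊕ κB → ZMod M) → T × T' :=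
  fun u v => (f (u ∘ Sum.inl) (v ∘ Sum.inl), f' (u ∘ Sum.inr) (v ∘ Sum.inr))

theorem removes_sumProd {ΔxA : ιA → ℂ} {ΔxB : ιB → ℂ} {ΔyA : κA → ℂ} {ΔyB : κB → ℂ}
    {f : (ιA → ZMod M) → (ιB → ZMod M) → T} {f' : (κA → ZMod M) → (κB → ZMod M) → T'}
    (hf : Removes ΔxA ΔxB f) (hf' : Removes ΔyA ΔyB f') (k : ℂ) :
    Removes (Sum.elim ΔxA (fun j => k * ΔyA j)) (Sum.elim ΔxB (fun j => k * ΔyB j))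
      (sumProd f f') := by
  rintro u u' v v' ⟨c, hu, hv⟩
  have hl : f (u ∘ Sum.inl) (v ∘ Sum.inl) = f (u' ∘ Sum.inl) (v' ∘ Sum.inl) :=
    hf _ _ _ _ ⟨c, fun i => hu (Sum.inl i), fun j => hv (Sum.inl j)⟩
  have hr : f' (u ∘ Sum.inr) (v ∘ Sum.inr) = f' (u' ∘ Sum.inr) (v' ∘ Sum.inr) := by
    refine hf' _ _ _ _ ⟨c * k, fun i => ?_, fun j => ?_⟩
    · simpa only [comp_apply, Sum.elim_inr, mul_assoc] using hu (Sum.inr i)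
    · simpa only [comp_apply, Sum.elim_inr, mul_assoc] using hv (Sum.inr j)
  exact Prod.ext hl hr

theorem exclusiveLaw_iff_injective {f : (ιA → ZMod M) → (ιB → ZMod M) → T} :
    ExclusiveLaw f ↔ (∀ b, Injective (f · b)) ∧ ∀ a, Injective (f a) := by
  simp only [ExclusiveLaw, Injective, ne_eq, not_imp_not]
  exact and_congr ⟨fun h b _ _ => h _ _ b, fun h a a' b => @h b a a'⟩ Iff.rfl

theorem exclusiveLaw_sumProd {f : (ιA → ZMod M) → (ιB → ZMod M) → T}
    {f' : (κA → ZMod M) → (κB → ZMod M) → T'} (hf : ExclusiveLaw f) (hf' : ExclusiveLaw f') :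
    ExclusiveLaw (sumProd f f') := by
  rw [exclusiveLaw_iff_injective] at hf hf' ⊢
  exact ⟨fun _ => ((hf.1 _).prodMap (hf'.1 _)).comp
      (Equiv.sumArrowEquivProdArrow _ _ _).injective,
    fun _ => ((hf.2 _).prodMap (hf'.2 _)).comp (Equiv.sumArrowEquivProdArrow _ _ _).injective⟩

end Product

theorem cartesian_product_removes_general (M : ℕ)
    (a b : ℕ)
    (T T' : Type*)
    (ΔxA ΔxB : Fin a → ℂ) (ΔyA ΔyB : Fin b → ℂ)
    (f : (Fin a → ZMod M) → (Fin a → ZMod M) → T)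
    (f' : (Fin b → ZMod M) → (Fin b → ZMod M) → T')
    (hf : Removes ΔxA ΔxB f) (hf' : Removes ΔyA ΔyB f')
    (k : ℂ) :
    Removes (Sum.elim ΔxA (fun j => k * ΔyA j)) (Sum.elim ΔxB (fun j => k * ΔyB j))
      (fun (u v : Fin a ⊕ Fin b → ZMod M) =>
        (f (u ∘ Sum.inl) (v ∘ Sum.inl), f' (u ∘ Sum.inr) (v ∘ Sum.inr))) ∧
    (ExclusiveLaw f → ExclusiveLaw f' →
      ExclusiveLaw (fun (u v : Fin a ⊕ Fin b → ZMod M) =>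
        (f (u ∘ Sum.inl) (v ∘ Sum.inl), f' (u ∘ Sum.inr) (v ∘ Sum.inr)))) :=
  ⟨removes_sumProd hf hf' k, exclusiveLaw_sumProd⟩

theorem cartesian_product_removes (lam : ℕ) (hlam : 1 ≤ lam) (M : ℕ) (hM : M = 2 ^ lam)
    (a b : ℕ) (ha : 1 ≤ a) (hb : 1 ≤ b)
    (T T' : Type*)
    (ΔxA ΔxB : Fin a → ℂ) (ΔyA ΔyB : Fin b → ℂ)
    (f : (Fin a → ZMod M) → (Fin a → ZMod M) → T)
    (f' : (Fin b → ZMod M) → (Fin b → ZMod M) → T')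
    (hf : Removes ΔxA ΔxB f) (hf' : Removes ΔyA ΔyB f')
    (k : ℂ) :
    Removes (Sum.elim ΔxA (fun j => k * ΔyA j)) (Sum.elim ΔxB (fun j => k * ΔyB j))
      (fun (u v : Fin a ⊕ Fin b → ZMod M) =>
        (f (u ∘ Sum.inl) (v ∘ Sum.inl), f' (u ∘ Sum.inr) (v ∘ Sum.inr))) ∧
    (ExclusiveLaw f → ExclusiveLaw f' →
      ExclusiveLaw (fun (u v : Fin a ⊕ Fin b → ZMod M) =>
        (f (u ∘ Sum.inl) (v ∘ Sum.inl), f' (u ∘ Sum.inr) (v ∘ Sum.inr)))) :=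
  cartesian_product_removes_general M a b T T' ΔxA ΔxB ΔyA ΔyB f f' hf hf' k
end

section
/- Let λ ≥ 1 be an integer, M = 2^λ, and let R = {2·sin(kπ/M) : k ∈ ℕ, 1 ≤ k ≤ M/2} ⊆ ℝ. Define the relation ≈ on R × R by (r₁, r₂) ≈ (s₁, s₂) iff there exists a real c > 0 with (s₁, s₂) = (c·r₁, c·r₂) or (s₁, s₂) = (c·r₂, c·r₁). Then ≈ is an equivalence relation on R × R, and the number of its equivalence classes equals (M² − 2M + 8)/8. -/
/-!
Positive pairs are equal up to scaling and swapping iff they have the same ratio `max / min`, so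
the classes correspond to the ratios `sin (a π / M) / sin (b π / M)`, `1 ≤ b ≤ a ≤ M / 2`. The
diagonal gives the single ratio `1`; the off-diagonal ratios are pairwise distinct. Indeed, by
product-to-sum an equality `sin a · sin b' = sin a' · sin b` becomes `cos + cos = cos + cos` at
integer multiples of `π / M`. Since `2 cos (t π / M) = ζ ^ t - ζ ^ (M - t)` for `ζ = exp (π i / M)`,
this yields a rational polynomial of degree `≤ M` with coefficient sum `0` vanishing at `ζ`. For
`M` a power of two the minimal polynomial of `ζ` is `X ^ M + 1`, which forces the polynomial to be
zero: the two multisets of exponents coincide, and a finite check gives `(a, b) = (a', b')`.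
-/

open Polynomial Real Set

theorem cyclotomic_two_pow_succ (R : Type*) [CommRing R] (n : ℕ) :
    cyclotomic (2 ^ (n + 1)) R = X ^ 2 ^ n + 1 := by
  simp [cyclotomic_prime_pow_eq_geom_sum Nat.prime_two, Finset.sum_range_succ, add_comm]

theorem coeff_sum_map_X_pow {R : Type*} [Semiring R] (s : Multiset ℕ) (j : ℕ) :
    (s.map ((X : R[X]) ^ ·)).sum.coeff j = s.count j := by
  induction s using Multiset.induction with
  | empty => simp
  | cons a s ih => simp [Multiset.count_cons, coeff_X_pow, ih, add_comm]

theorem aeval_sum_map_X_pow {R A : Type*} [CommSemiring R] [Semiring A] [Algebra R A] (x : A)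
    (s : Multiset ℕ) : aeval x (s.map ((X : R[X]) ^ ·)).sum = (s.map (x ^ ·)).sum := by
  rw [map_multiset_sum, Multiset.map_map]
  simp

theorem Multiset.eq_of_sum_map_X_pow_eq {R : Type*} [Semiring R] [CharZero R] {s t : Multiset ℕ}
    (h : (s.map ((X : R[X]) ^ ·)).sum = (t.map (X ^ ·)).sum) : s = t :=
  Multiset.ext.2 fun j => by
    simpa only [coeff_sum_map_X_pow, Nat.cast_inj] using congrArg (coeff · j) h

theorem eq_zero_of_X_pow_add_one_dvd {R : Type*} [CommRing R] [IsDomain R] [CharZero R]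
    {M : ℕ} {p : R[X]} (hdvd : X ^ M + 1 ∣ p) (hdeg : p.natDegree ≤ M) (h1 : p.eval 1 = 0) :
    p = 0 := by
  obtain ⟨q, rfl⟩ := hdvd
  by_contra hp
  have hq : q ≠ 0 := right_ne_zero_of_mul hp
  have hX : (X ^ M + 1 : R[X]).natDegree = M := by
    simpa using natDegree_X_pow_add_C (n := M) (r := (1 : R))
  have hq0 : q.natDegree = 0 := by
    have := natDegree_mul (left_ne_zero_of_mul hp) hq
    omega
  rw [eq_C_of_natDegree_eq_zero hq0] at h1 hq
  have h2 : (2 : R) * q.coeff 0 = 0 := by simpa [one_add_one_eq_two] using h1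
  exact hq (by rw [(mul_eq_zero.1 h2).resolve_left two_ne_zero, C_0])

theorem isPrimitiveRoot_exp_pi_mul_I_div {M : ℕ} (hM : 0 < M) :
    IsPrimitiveRoot (Complex.exp (π * Complex.I / M)) (2 * M) := by
  convert Complex.isPrimitiveRoot_exp (2 * M) (by omega) using 2
  push_cast
  field_simp

theorem exp_pi_mul_I_div_pow_sub_pow {M t : ℕ} (hM : 0 < M) (ht : t ≤ M) :
    Complex.exp (π * Complex.I / M) ^ t - Complex.exp (π * Complex.I / M) ^ (M - t)
      = 2 * Real.cos (t * π / M) := by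
  have hMC : (M : ℂ) ≠ 0 := by exact_mod_cast hM.ne'
  rw [← Complex.exp_nat_mul, ← Complex.exp_nat_mul, Nat.cast_sub ht, Complex.ofReal_cos,
    Complex.two_cos]
  have : ((M : ℂ) - t) * (π * Complex.I / M) = π * Complex.I + -(↑(t * π / M : ℝ) * Complex.I) := by
    push_cast; field_simp; ring
  rw [this, Complex.exp_add, Complex.exp_pi_mul_I]
  push_cast
  ring_nf

theorem natDegree_sum_map_X_pow_le {R : Type*} [Semiring R] {s : Multiset ℕ} {M : ℕ}
    (hs : ∀ t ∈ s, t ≤ M) : (s.map ((X : R[X]) ^ ·)).sum.natDegree ≤ M :=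
  natDegree_le_iff_coeff_eq_zero.2 fun j hj => by
    rw [coeff_sum_map_X_pow, Multiset.count_eq_zero.2 fun hj' => (hs j hj').not_gt hj,
      Nat.cast_zero]

theorem minpoly_exp_pi_mul_I_div {M n : ℕ} (hM : M = 2 ^ n) :
    minpoly ℚ (Complex.exp (π * Complex.I / M)) = X ^ M + 1 := by
  have hM0 : 0 < M := hM ▸ Nat.two_pow_pos n
  rw [← cyclotomic_eq_minpoly_rat (isPrimitiveRoot_exp_pi_mul_I_div hM0) (by omega), hM,
    ← pow_succ', cyclotomic_two_pow_succ]

theorem add_map_sub_eq_of_sum_cos_eq {M n : ℕ} (hM : M = 2 ^ n) {P Q : Multiset ℕ}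
    (hP : ∀ t ∈ P, t ≤ M) (hQ : ∀ t ∈ Q, t ≤ M)
    (h : (P.map fun t : ℕ => cos (t * π / M)).sum = (Q.map fun t : ℕ => cos (t * π / M)).sum) :
    P + Q.map (M - ·) = Q + P.map (M - ·) := by
  have hM0 : 0 < M := hM ▸ Nat.two_pow_pos n
  set ζ := Complex.exp (π * Complex.I / M)
  have hsum : ∀ s : Multiset ℕ, (∀ t ∈ s, t ≤ M) →
      (s.map (ζ ^ ·)).sum - ((s.map (M - ·)).map (ζ ^ ·)).sum
        = 2 * Complex.ofRealHom (s.map fun t : ℕ => cos (t * π / M)).sum := by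
    intro s hs
    rw [Multiset.map_map, ← Multiset.sum_map_sub, map_multiset_sum, Multiset.map_map,
      ← Multiset.sum_map_mul_left]
    exact congrArg Multiset.sum
      (Multiset.map_congr rfl fun t ht => exp_pi_mul_I_div_pow_sub_pow hM0 (hs t ht))
  have hbound : ∀ s s' : Multiset ℕ, (∀ t ∈ s, t ≤ M) → ∀ t ∈ s + s'.map (M - ·), t ≤ M := by
    simp only [Multiset.mem_add, Multiset.mem_map]
    rintro s s' hs t (ht | ⟨u, -, rfl⟩)
    exacts [hs t ht, Nat.sub_le M u]
  refine Multiset.eq_of_sum_map_X_pow_eq (R := ℚ)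
    (sub_eq_zero.1 (eq_zero_of_X_pow_add_one_dvd (M := M) ?_ ?_ ?_))
  · rw [← minpoly_exp_pi_mul_I_div hM]
    refine minpoly.dvd ℚ _ ?_
    rw [map_sub, aeval_sum_map_X_pow, aeval_sum_map_X_pow, Multiset.map_add, Multiset.map_add,
      Multiset.sum_add, Multiset.sum_add]
    linear_combination hsum P hP - hsum Q hQ + 2 * congrArg Complex.ofRealHom h
  · exact (natDegree_sub_le _ _).trans
      (max_le (natDegree_sum_map_X_pow_le (hbound P Q hP))
        (natDegree_sum_map_X_pow_le (hbound Q P hQ)))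
  · rw [← coe_aeval_eq_eval, map_sub, aeval_sum_map_X_pow, aeval_sum_map_X_pow]
    simp [add_comm]

theorem cos_sub_eq_cos_dist (a b : ℕ) (x : ℝ) : cos (a * x - b * x) = cos (a.dist b * x) := by
  rcases le_total b a with h | h
  · rw [Nat.dist_eq_sub_of_le_right h, Nat.cast_sub h, sub_mul]
  · rw [Nat.dist_eq_sub_of_le h, Nat.cast_sub h, ← cos_neg, sub_mul, neg_sub]

theorem eq_of_sin_mul_sin_eq {M n a b a' b' : ℕ} (hM : M = 2 ^ n)
    (hb : 1 ≤ b) (hba : b < a) (ha : 2 * a ≤ M) (hb' : 1 ≤ b') (hba' : b' < a') (ha' : 2 * a' ≤ M)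
    (h : sin (a * π / M) * sin (b' * π / M) = sin (a' * π / M) * sin (b * π / M)) :
    a = a' ∧ b = b' := by
  have hcos : (({a.dist b', a' + b} : Multiset ℕ).map fun t : ℕ => cos (t * π / M)).sum
      = (({a'.dist b, a + b'} : Multiset ℕ).map fun t : ℕ => cos (t * π / M)).sum := by
    have e1 := two_mul_sin_mul_sin (a * (π / M)) (b' * (π / M))
    have e2 := two_mul_sin_mul_sin (a' * (π / M)) (b * (π / M))
    rw [cos_sub_eq_cos_dist, ← add_mul, ← Nat.cast_add] at e1 e2
    simp only [mul_div_assoc] at h ⊢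
    simp only [Multiset.insert_eq_cons, Multiset.map_cons, Multiset.sum_cons,
      Multiset.map_singleton, Multiset.sum_singleton]
    linear_combination e2 - e1 + 2 * h
  have hbound : ∀ u v : ℕ, u ≤ M → v ≤ M → ∀ t ∈ ({u, v} : Multiset ℕ), t ≤ M := by
    simp only [Multiset.insert_eq_cons, Multiset.mem_cons, Multiset.mem_singleton,
      forall_eq_or_imp, forall_eq]
    exact fun u v hu hv => ⟨hu, hv⟩
  have hperm := add_map_sub_eq_of_sum_cos_eq hM
    (hbound _ _ (by unfold Nat.dist; omega) (by omega))
    (hbound _ _ (by unfold Nat.dist; omega) (by omega)) hcos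
  have hlist : [a.dist b', a' + b, M - a'.dist b, M - (a + b')].Perm
      [a'.dist b, a + b', M - a.dist b', M - (a' + b)] := Multiset.coe_eq_coe.1 hperm
  rw [← List.mem_permutations'] at hlist
  simp only [List.permutations', Nat.dist, List.flatMap_cons, List.permutations'Aux,
    List.flatMap_nil, List.append_nil, List.map_cons, List.map_nil, List.cons_append,
    List.nil_append, List.mem_cons, List.cons.injEq, and_true, List.not_mem_nil, or_false] at hlist
  omega

noncomputable def pairRatio (x y : ℝ) : ℝ := max x y / min x y

theorem pairRatio_comm (x y : ℝ) : pairRatio x y = pairRatio y x := by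
  rw [pairRatio, pairRatio, max_comm, min_comm]

theorem pairRatio_of_le {x y : ℝ} (h : x ≤ y) : pairRatio x y = y / x := by
  rw [pairRatio, max_eq_right h, min_eq_left h]

theorem pairRatio_self {x : ℝ} (hx : x ≠ 0) : pairRatio x x = 1 := by
  rw [pairRatio, max_self, min_self, div_self hx]

theorem pairRatio_mul_left {c : ℝ} (hc : 0 < c) (x y : ℝ) :
    pairRatio (c * x) (c * y) = pairRatio x y := by
  rw [pairRatio, pairRatio, ← mul_max_of_nonneg _ _ hc.le, ← mul_min_of_nonneg _ _ hc.le,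
    mul_div_mul_left _ _ hc.ne']

theorem exists_mul_eq_of_div_eq {x y x' y' : ℝ} (hx : 0 < x) (hx' : 0 < x') (h : y / x = y' / x') :
    ∃ c > 0, x' = c * x ∧ y' = c * y := by
  refine ⟨x' / x, by positivity, by field_simp, ?_⟩
  rw [div_eq_div_iff hx.ne' hx'.ne'] at h
  field_simp
  linarith

theorem pairRatio_eq_iff {x y x' y' : ℝ} (hx : 0 < x) (hy : 0 < y) (hx' : 0 < x') (hy' : 0 < y') :
    pairRatio x y = pairRatio x' y' ↔
      ∃ c > 0, (x' = c * x ∧ y' = c * y) ∨ (x' = c * y ∧ y' = c * x) := by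
  constructor
  · intro h
    rcases le_total x y with hxy | hxy <;> rcases le_total x' y' with hxy' | hxy'
    · rw [pairRatio_of_le hxy, pairRatio_of_le hxy'] at h
      obtain ⟨c, hc, h1, h2⟩ := exists_mul_eq_of_div_eq hx hx' h
      exact ⟨c, hc, .inl ⟨h1, h2⟩⟩
    · rw [pairRatio_of_le hxy, pairRatio_comm x', pairRatio_of_le hxy'] at h
      obtain ⟨c, hc, h1, h2⟩ := exists_mul_eq_of_div_eq hx hy' h
      exact ⟨c, hc, .inr ⟨h2, h1⟩⟩
    · rw [pairRatio_comm x, pairRatio_of_le hxy, pairRatio_of_le hxy'] at h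
      obtain ⟨c, hc, h1, h2⟩ := exists_mul_eq_of_div_eq hy hx' h
      exact ⟨c, hc, .inr ⟨h1, h2⟩⟩
    · rw [pairRatio_comm x, pairRatio_of_le hxy, pairRatio_comm x', pairRatio_of_le hxy'] at h
      obtain ⟨c, hc, h1, h2⟩ := exists_mul_eq_of_div_eq hy hy' h
      exact ⟨c, hc, .inl ⟨h2, h1⟩⟩
  · rintro ⟨c, hc, ⟨rfl, rfl⟩ | ⟨rfl, rfl⟩⟩
    · rw [pairRatio_mul_left hc]
    · rw [pairRatio_mul_left hc, pairRatio_comm]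

theorem equivalence_of_iff_eq {α β : Type*} {r : α → α → Prop} (f : α → β)
    (h : ∀ a b, r a b ↔ f a = f b) : Equivalence r := by
  obtain rfl : r = fun a b => f a = f b := funext₂ fun a b => propext (h a b)
  exact (Setoid.ker f).iseqv

theorem card_quot_eq_card_range {α β : Type*} {r : α → α → Prop} (f : α → β)
    (h : ∀ a b, r a b ↔ f a = f b) : Nat.card (Quot r) = Nat.card (range f) := by
  obtain rfl : r = fun a b => f a = f b := funext₂ fun a b => propext (h a b)
  exact Nat.card_congr (Setoid.quotientKerEquivRange f)

theorem range_prod_subtype_eq_image2 {α β γ : Type*} (f : α → β → γ) (s : Set α) (t : Set β) :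
    range (fun p : s × t => f p.1 p.2) = image2 f s t := by
  ext
  simp [eq_comm]

theorem ncard_image2_pairRatio {s : ℕ → ℝ} {N : ℕ} (hN : 1 ≤ N) (hpos : ∀ k ∈ Icc 1 N, 0 < s k)
    (hmono : StrictMonoOn s (Icc 1 N))
    (hinj : InjOn (fun x : ℕ × ℕ => s x.2 / s x.1) {x | 1 ≤ x.1 ∧ x.1 < x.2 ∧ x.2 ≤ N}) :
    (image2 (fun a b => pairRatio (s a) (s b)) (Icc 1 N) (Icc 1 N)).ncard = N.choose 2 + 1 := by
  set T : Finset (ℕ × ℕ) := {x ∈ Finset.Icc 1 N ×ˢ Finset.Icc 1 N | x.1 < x.2}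
  have hT : ∀ x, x ∈ (T : Set (ℕ × ℕ)) ↔ 1 ≤ x.1 ∧ x.1 < x.2 ∧ x.2 ≤ N := by
    intro x
    simp only [T, Finset.coe_filter, Finset.mem_product, Finset.mem_Icc, mem_ofPred_eq]
    omega
  have hgt : ∀ x ∈ (T : Set (ℕ × ℕ)), 1 < s x.2 / s x.1 := by
    intro x hx
    rw [hT] at hx
    exact (one_lt_div (hpos _ ⟨hx.1, by omega⟩)).2
      (hmono ⟨hx.1, by omega⟩ ⟨by omega, hx.2.2⟩ hx.2.1)
  have himage : image2 (fun a b => pairRatio (s a) (s b)) (Icc 1 N) (Icc 1 N)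
      = insert 1 ((fun x : ℕ × ℕ => s x.2 / s x.1) '' T) := by
    apply Subset.antisymm
    · rintro _ ⟨a, ⟨ha1, haN⟩, b, ⟨hb1, hbN⟩, rfl⟩
      rcases lt_trichotomy a b with hab | rfl | hab
      · refine .inr ⟨(a, b), (hT _).2 ⟨ha1, hab, hbN⟩, ?_⟩
        exact (pairRatio_of_le (hmono ⟨ha1, haN⟩ ⟨hb1, hbN⟩ hab).le).symm
      · exact .inl (pairRatio_self (hpos a ⟨ha1, haN⟩).ne')
      · refine .inr ⟨(b, a), (hT _).2 ⟨hb1, hab, haN⟩, ?_⟩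
        show s a / s b = pairRatio (s a) (s b)
        rw [pairRatio_comm, pairRatio_of_le (hmono ⟨hb1, hbN⟩ ⟨ha1, haN⟩ hab).le]
    · rintro _ (rfl | ⟨x, hx, rfl⟩)
      · exact ⟨1, ⟨le_rfl, hN⟩, 1, ⟨le_rfl, hN⟩, pairRatio_self (hpos 1 ⟨le_rfl, hN⟩).ne'⟩
      · obtain ⟨h1, h12, h2⟩ := (hT x).1 hx
        exact ⟨x.1, ⟨h1, by omega⟩, x.2, ⟨by omega, h2⟩,
          pairRatio_of_le (hmono ⟨h1, by omega⟩ ⟨by omega, h2⟩ h12).le⟩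
  have hone : 1 ∉ (fun x : ℕ × ℕ => s x.2 / s x.1) '' T := by
    rintro ⟨x, hx, hx1⟩
    exact (hgt x hx).ne' hx1
  rw [himage, ncard_insert_of_notMem hone, (hinj.mono fun x hx => (hT x).1 hx).ncard_image,
    ncard_coe_finset, Finset.card_product_filter_lt, Nat.card_Icc, Nat.add_sub_cancel]

theorem sin_natCast_mul_pi_div_pos {M k : ℕ} (hk : 0 < k) (hkM : k < M) : 0 < sin (k * π / M) := by
  have hk' : (0 : ℝ) < k := by exact_mod_cast hk
  have hkM' : (k : ℝ) < M := by exact_mod_cast hkM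
  apply sin_pos_of_pos_of_lt_pi (div_pos (mul_pos hk' pi_pos) (hk'.trans hkM'))
  rw [div_lt_iff₀ (hk'.trans hkM')]
  nlinarith [pi_pos]

theorem sin_natCast_mul_pi_div_lt {M a b : ℕ} (hab : a < b) (hb : 2 * b ≤ M) :
    sin (a * π / M) < sin (b * π / M) := by
  have hM : (0 : ℝ) < M := by exact_mod_cast (by omega : 0 < M)
  have hmem : ∀ k : ℕ, k ≤ b → k * π / M ∈ Icc (-(π / 2)) (π / 2) := by
    intro k hk
    have hk' : (2 * k : ℝ) ≤ M := by exact_mod_cast (by omega : 2 * k ≤ M)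
    refine ⟨by linarith [pi_pos, (by positivity : 0 ≤ k * π / M)], ?_⟩
    rw [div_le_iff₀ hM]
    nlinarith [pi_pos]
  exact strictMonoOn_sin (hmem a hab.le) (hmem b le_rfl) (by gcongr)

theorem injOn_sin_div_sin {M n : ℕ} (hM : M = 2 ^ n) :
    InjOn (fun x : ℕ × ℕ => sin (x.2 * π / M) / sin (x.1 * π / M))
      {x | 1 ≤ x.1 ∧ x.1 < x.2 ∧ x.2 ≤ M / 2} := by
  rintro ⟨b, a⟩ ⟨hb, hba, ha⟩ ⟨b', a'⟩ ⟨hb', hba', ha'⟩ h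
  rw [div_eq_div_iff (sin_natCast_mul_pi_div_pos hb (by omega)).ne'
    (sin_natCast_mul_pi_div_pos hb' (by omega)).ne'] at h
  obtain ⟨rfl, rfl⟩ := eq_of_sin_mul_sin_eq hM hb hba (by omega) hb' hba' (by omega) h
  rfl

theorem ncard_image2_pairRatio_sin {M n : ℕ} (hn : 1 ≤ n) (hM : M = 2 ^ n) :
    (image2 (fun a b : ℕ => pairRatio (sin (a * π / M)) (sin (b * π / M)))
      (Icc 1 (M / 2)) (Icc 1 (M / 2))).ncard = (M / 2).choose 2 + 1 := by
  have hM2 : 2 ≤ M := hM ▸ Nat.le_self_pow (by omega) 2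
  exact ncard_image2_pairRatio (by omega)
    (fun k ⟨hk1, hk2⟩ => sin_natCast_mul_pi_div_pos hk1 (by omega))
    (fun a _ b ⟨_, hb⟩ hab => sin_natCast_mul_pi_div_lt hab (by omega)) (injOn_sin_div_sin hM)

theorem div_two_choose_two_add_one {M : ℕ} (hM : Even M) :
    (M / 2).choose 2 + 1 = (M ^ 2 - 2 * M + 8) / 8 := by
  obtain ⟨N, rfl⟩ := hM
  obtain ⟨m, hm⟩ := Nat.even_mul_pred_self N
  rw [show (N + N) / 2 = N by omega, Nat.choose_two_right]
  rcases N with _ | k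
  · rfl
  · simp only [Nat.add_sub_cancel] at hm ⊢
    ring_nf at hm ⊢
    omega

theorem card_classes_pairs (lam : ℕ) (hlam : 1 ≤ lam) (M : ℕ) (hM : M = 2 ^ lam)
    (Rset : Set ℝ)
    (hRset : Rset = {r : ℝ | ∃ k : ℕ, 1 ≤ k ∧ k ≤ M / 2 ∧ r = 2 * Real.sin (k * Real.pi / M)})
    (rel : Rset × Rset → Rset × Rset → Prop)
    (hrel : ∀ p q : Rset × Rset, rel p q ↔ ∃ c : ℝ, 0 < c ∧
      (((q.1 : ℝ) = c * (p.1 : ℝ) ∧ (q.2 : ℝ) = c * (p.2 : ℝ)) ∨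
       ((q.1 : ℝ) = c * (p.2 : ℝ) ∧ (q.2 : ℝ) = c * (p.1 : ℝ)))) :
    Equivalence rel ∧ Nat.card (Quot rel) = (M ^ 2 - 2 * M + 8) / 8 := by
  have hRset' : Rset = (fun k : ℕ => 2 * sin (k * π / M)) '' Icc 1 (M / 2) := by
    ext r
    simp only [hRset, mem_ofPred_eq, mem_image, mem_Icc]
    grind
  have hM2 : 2 ≤ M := hM ▸ Nat.le_self_pow (by omega) 2
  have hR : ∀ x ∈ Rset, 0 < x := by
    rw [hRset']
    rintro _ ⟨k, ⟨hk1, hk2⟩, rfl⟩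
    exact mul_pos two_pos (sin_natCast_mul_pi_div_pos hk1 (by omega))
  have hrelF : ∀ p q : Rset × Rset, rel p q ↔ pairRatio p.1 p.2 = pairRatio q.1 q.2 := fun p q =>
    (hrel p q).trans (pairRatio_eq_iff (hR _ p.1.2) (hR _ p.2.2) (hR _ q.1.2) (hR _ q.2.2)).symm
  refine ⟨equivalence_of_iff_eq _ hrelF, ?_⟩
  rw [card_quot_eq_card_range _ hrelF, range_prod_subtype_eq_image2, hRset', image2_image_left,
    image2_image_right]
  simp only [pairRatio_mul_left two_pos]
  rw [Nat.card_coe_set_eq, ncard_image2_pairRatio_sin hlam hM,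
    div_two_choose_two_add_one (hM ▸ (Nat.even_pow' (by omega)).2 even_two)]
end

section
/- Let λ ≥ 1 be an integer, M = 2^λ, and let R = {2·sin(kπ/M) : k ∈ ℕ, 1 ≤ k ≤ M/2} ⊆ ℝ. Define the relation ≈ on R × R × R by (r₁, r₂, r₃) ≈ (s₁, s₂, s₃) iff there exists a real c > 0 with (s₁, s₂, s₃) = (c·r₁, c·r₂, c·r₃) or (s₁, s₂, s₃) = (c·r₂, c·r₁, c·r₃). Then ≈ is an equivalence relation on R × R × R, and the number of its equivalence classes equals (M³ + 2M² − 8M + 16)/16. -/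
/-!
Write `N = M / 2`, `θ = π / M` and `ζ = exp (iθ)`, a primitive `2M`-th root of unity whose minimal
polynomial over `ℚ` has degree `M`, as `M` is a power of two. Multiplying a rational relation
among the `cos (jθ)`, `j < N`, by `ζ ^ N = i` gives a polynomial of degree `< M` vanishing at `ζ`,
so these cosines are linearly independent over `ℚ`. Since
`2 sin (aθ) sin (bθ) = cos ((a - b)θ) - cos ((a + b)θ)`, comparing coefficients shows that the
ratios `x / y` of distinct elements of `R` are pairwise distinct. Hence the scaling factor relating
two triples is `1` unless the triples are constant: a non-constant triple is related only to itself
and to its swap, and the constant triples form one class. This gives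
`1 + N · N(N + 1)/2 - N = (M³ + 2M² - 8M + 16)/16` classes.
-/

open Real Polynomial

lemma aeval_X_pow_add_X_pow_sub {N k : ℕ} (hN : 0 < N) (hk : k ≤ N) :
    aeval (Complex.exp (2 * π * Complex.I / ((4 * N : ℕ) : ℂ)))
        (X ^ (N + k) + X ^ (N - k) : ℚ[X])
      = 2 * Complex.I * (cos (k * π / (2 * N)) : ℂ) := by
  have hN' : (N : ℂ) ≠ 0 := by exact_mod_cast hN.ne'
  have hpow : ∀ m : ℕ, Complex.exp (2 * π * Complex.I / ((4 * N : ℕ) : ℂ)) ^ m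
      = Complex.exp (m * (π / (2 * N)) * Complex.I) := by
    intro m
    rw [← Complex.exp_nat_mul]
    congr 1
    push_cast
    field_simp
    ring
  set z : ℂ := ((k * π / (2 * N) : ℝ) : ℂ)
  have hplus : ((N + k : ℕ) : ℂ) * (π / (2 * N)) * Complex.I
      = π / 2 * Complex.I + z * Complex.I := by
    simp only [z]; push_cast; field_simp
  have hminus : ((N - k : ℕ) : ℂ) * (π / (2 * N)) * Complex.I
      = π / 2 * Complex.I + -z * Complex.I := by
    simp only [z]; push_cast [Nat.cast_sub hk]; field_simp; ring
  simp only [map_add, map_pow, aeval_X, hpow]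
  rw [hplus, hminus, Complex.exp_add, Complex.exp_add, Complex.exp_pi_div_two_mul_I,
    Complex.ofReal_cos]
  linear_combination (-Complex.I) * Complex.two_cos z

lemma natDegree_minpoly_exp_two_pow {n N : ℕ} (hN : N = 2 ^ n) :
    (minpoly ℚ (Complex.exp (2 * π * Complex.I / ((4 * N : ℕ) : ℂ)))).natDegree = 2 * N := by
  subst hN
  have hζ := Complex.isPrimitiveRoot_exp (4 * 2 ^ n) (by positivity)
  rw [← cyclotomic_eq_minpoly_rat hζ (by positivity), natDegree_cyclotomic,
    show 4 * 2 ^ n = 2 ^ (n + 2) by ring, Nat.totient_prime_pow Nat.prime_two (by omega),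
    show n + 2 - 1 = n + 1 by omega]
  ring

theorem linearIndependent_cos_mul_pi_div {n N : ℕ} (hN : N = 2 ^ n) :
    LinearIndependent ℚ (fun k : Fin N => cos (k * π / (2 * N))) := by
  rw [Fintype.linearIndependent_iff]
  intro g hg j
  have hN0 : 0 < N := hN ▸ by positivity
  set Q : ℚ[X] := ∑ k : Fin N, C (g k) * (X ^ (N + k) + X ^ (N - k))
  have hQζ : aeval (Complex.exp (2 * π * Complex.I / ((4 * N : ℕ) : ℂ))) Q = 0 := by
    simp only [Q, map_sum, map_mul, aeval_C, aeval_X_pow_add_X_pow_sub hN0, Fin.is_le']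
    calc _ = 2 * Complex.I * ((∑ k : Fin N, g k • cos (k * π / (2 * N)) : ℝ) : ℂ) := by
          simp only [Rat.smul_def, Complex.ofReal_sum, Complex.ofReal_mul, Finset.mul_sum]
          refine Finset.sum_congr rfl fun k _ => ?_
          simp only [eq_ratCast, Complex.ofReal_ratCast]
          ring
      _ = 0 := by rw [hg, Complex.ofReal_zero, mul_zero]
  have hQ : Q = 0 := by
    by_contra hQ0
    have hdeg := natDegree_le_natDegree (minpoly.degree_le_of_ne_zero ℚ _ hQ0 hQζ)
    rw [natDegree_minpoly_exp_two_pow hN] at hdeg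
    have : Q.natDegree < 2 * N := by
      refine lt_of_le_of_lt
        (natDegree_sum_le_of_forall_le _ _ (n := 2 * N - 1) fun k _ => ?_) ?_
      · refine (natDegree_C_mul_le _ _).trans (natDegree_add_le_of_degree_le ?_ ?_) <;>
          simp only [natDegree_X_pow] <;> omega
      · omega
    omega
  have hcoeff : Q.coeff (N + j) = g j * (1 + if N + j = N - j then 1 else 0) := by
    simp only [Q, finsetSum_coeff, coeff_C_mul, coeff_add, coeff_X_pow]
    rw [Finset.sum_eq_single j]
    · simp [mul_add]
    · intro k _ hkj
      have := Fin.val_ne_of_ne hkj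
      split_ifs <;> first | omega | simp
    · simp
  rw [hQ, coeff_zero] at hcoeff
  have : (0:ℚ) < 1 + if N + j = N - j then 1 else 0 := by split_ifs <;> norm_num
  exact (mul_eq_zero.1 hcoeff.symm).resolve_right this.ne'

-- `cos (π - x) = - cos x` folds `cos (sπ/2N)`, `s ≤ 2N`, onto the `cos (jπ/2N)` with `j < N`.
def cosCoeff (N s j : ℕ) : ℤ := (if s = j then 1 else 0) - (if s + j = 2 * N then 1 else 0)

lemma cos_eq_sum_cosCoeff {N s : ℕ} (hN : 0 < N) (hs : s ≤ 2 * N) :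
    cos (s * π / (2 * N))
      = ∑ j ∈ Finset.range N, (cosCoeff N s j : ℝ) * cos (j * π / (2 * N)) := by
  have hreflect : ∀ j ∈ Finset.range N, (if s + j = 2 * N then cos (j * π / (2 * N)) else 0)
      = if 2 * N - s = j then cos ((2 * N - s : ℕ) * π / (2 * N)) else 0 := by
    intro j _
    by_cases h : s + j = 2 * N
    · rw [if_pos h, if_pos (by omega), show 2 * N - s = j by omega]
    · rw [if_neg h, if_neg (by omega)]
  simp only [cosCoeff, Int.cast_sub, apply_ite (Int.cast : ℤ → ℝ), Int.cast_one, Int.cast_zero,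
    sub_mul, ite_mul, one_mul, zero_mul, Finset.sum_sub_distrib, Finset.sum_congr rfl hreflect,
    Finset.sum_ite_eq, Finset.mem_range]
  rcases lt_trichotomy s N with hlt | rfl | hgt
  · rw [if_pos hlt, if_neg (by omega), sub_zero]
  · rw [if_neg (lt_irrefl _), if_neg (by omega), sub_zero,
      show (s : ℝ) * π / (2 * s) = π / 2 by field_simp, cos_pi_div_two]
  · rw [if_neg (by omega), if_pos (by omega), zero_sub, Nat.cast_sub hs, ← cos_pi_sub]
    congr 1
    push_cast
    field_simp
    ring

lemma eq_zero_of_sum_intCast_mul_cos_eq_zero_s17 {n N : ℕ} (hN : N = 2 ^ n) {c : ℕ → ℤ}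
    (h : ∑ j ∈ Finset.range N, (c j : ℝ) * cos (j * π / (2 * N)) = 0) {j : ℕ} (hj : j < N) :
    c j = 0 := by
  have hsum : ∑ k : Fin N, (c k : ℚ) • cos (k * π / (2 * N)) = 0 := by
    simpa [Fin.sum_univ_eq_sum_range (fun j => (c j : ℝ) * cos (j * π / (2 * N))), Rat.smul_def]
      using h
  exact_mod_cast Fintype.linearIndependent_iff.1 (linearIndependent_cos_mul_pi_div hN) _ hsum
    ⟨j, hj⟩

lemma injOn_cos_mul_pi_div (N : ℕ) :
    Set.InjOn (fun s : ℕ => cos (s * π / (2 * N))) (Set.Iic (2 * N)) := by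
  intro s₁ hs₁ s₂ hs₂ h
  rcases Nat.eq_zero_or_pos N with rfl | hN
  · exact (Nat.le_zero.1 hs₁).trans (Nat.le_zero.1 hs₂).symm
  have hmem : ∀ s : ℕ, s ≤ 2 * N → (s : ℝ) * π / (2 * N) ∈ Set.Icc 0 π := fun s hs =>
    ⟨by positivity, by
      rw [div_le_iff₀ (by positivity)]
      have : (s : ℝ) ≤ 2 * N := by exact_mod_cast hs
      nlinarith [pi_pos]⟩
  have := injOn_cos (hmem s₁ hs₁) (hmem s₂ hs₂) h
  field_simp at this
  exact_mod_cast this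

lemma eq_and_eq_or_of_cos_sub_cos_eq {n N : ℕ} (hN : N = 2 ^ n) {u₁ s₁ u₂ s₂ : ℕ}
    (hu₁ : u₁ < N) (hu₂ : u₂ < N) (hs₁ : s₁ ≤ 2 * N) (hs₂ : s₂ ≤ 2 * N)
    (h₁ : u₁ < s₁) (h₂ : u₂ < s₂)
    (h : cos (u₁ * π / (2 * N)) - cos (s₁ * π / (2 * N))
      = cos (u₂ * π / (2 * N)) - cos (s₂ * π / (2 * N))) :
    (u₁ = u₂ ∧ s₁ = s₂) ∨ (s₁ + u₂ = 2 * N ∧ s₂ + u₁ = 2 * N) := by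
  by_cases hu : u₁ = u₂
  · subst hu
    exact Or.inl ⟨rfl, injOn_cos_mul_pi_div N hs₁ hs₂ (by linarith)⟩
  right
  have hN0 : 0 < N := by omega
  have hcoeff : ∀ j < N,
      cosCoeff N u₁ j - cosCoeff N s₁ j - cosCoeff N u₂ j + cosCoeff N s₂ j = 0 := by
    refine fun j hj => eq_zero_of_sum_intCast_mul_cos_eq_zero_s17 hN (c := fun j =>
      cosCoeff N u₁ j - cosCoeff N s₁ j - cosCoeff N u₂ j + cosCoeff N s₂ j) ?_ hj
    rw [cos_eq_sum_cosCoeff hN0 (by omega), cos_eq_sum_cosCoeff hN0 hs₁,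
      cos_eq_sum_cosCoeff hN0 (by omega), cos_eq_sum_cosCoeff hN0 hs₂] at h
    rw [← sub_eq_zero] at h
    rw [← h]
    simp only [Finset.sum_sub_distrib, Finset.sum_add_distrib, Int.cast_add, Int.cast_sub,
      add_mul, sub_mul]
    ring
  have at_u₁ := hcoeff u₁ hu₁
  have at_u₂ := hcoeff u₂ hu₂
  simp only [cosCoeff] at at_u₁ at_u₂
  constructor
  · split_ifs at at_u₂ <;> omega
  · split_ifs at at_u₁ <;> omega

lemma two_mul_sin_mul_sin_natCast (p q : ℕ) (d : ℝ) :
    2 * sin (p * π / d) * sin (q * π / d)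
      = cos ((p - q + (q - p) : ℕ) * π / d) - cos ((p + q : ℕ) * π / d) := by
  rw [two_mul_sin_mul_sin]
  congr 1
  · rcases le_total p q with hpq | hqp
    · rw [Nat.sub_eq_zero_of_le hpq, zero_add, Nat.cast_sub hpq, ← cos_neg]
      ring_nf
    · rw [Nat.sub_eq_zero_of_le hqp, add_zero, Nat.cast_sub hqp]
      ring_nf
  · push_cast
    ring_nf

lemma eq_and_eq_or_of_sin_mul_sin_eq {n N a b a' b' : ℕ} (hN : N = 2 ^ n)
    (ha : a ∈ Set.Icc 1 N) (hb : b ∈ Set.Icc 1 N)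
    (ha' : a' ∈ Set.Icc 1 N) (hb' : b' ∈ Set.Icc 1 N)
    (h : sin (a * π / (2 * N)) * sin (b' * π / (2 * N))
      = sin (a' * π / (2 * N)) * sin (b * π / (2 * N))) :
    (a = a' ∧ b = b') ∨ (a = b ∧ a' = b') := by
  simp only [Set.mem_Icc] at ha hb ha' hb'
  have hcos := congrArg (2 * ·) h
  simp only [← mul_assoc, two_mul_sin_mul_sin_natCast] at hcos
  rcases eq_and_eq_or_of_cos_sub_cos_eq hN (by omega) (by omega) (by omega) (by omega)
    (by omega) (by omega) hcos with h' | h' <;> omega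

def chordLengths (N : ℕ) : Set ℝ := (fun k : ℕ => 2 * sin (k * π / (2 * N))) '' Set.Icc 1 N

lemma mul_pi_div_mem_Ioc {N k : ℕ} (hk : k ∈ Set.Icc 1 N) :
    k * π / (2 * N) ∈ Set.Ioc 0 (π / 2) := by
  obtain ⟨hk1, hkN⟩ := hk
  have hk : (1 : ℝ) ≤ k := by exact_mod_cast hk1
  have hkN : (k : ℝ) ≤ N := by exact_mod_cast hkN
  constructor
  · exact div_pos (mul_pos (by linarith) pi_pos) (by linarith)
  · rw [div_le_div_iff₀ (by linarith) two_pos]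
    nlinarith [pi_pos]

lemma sin_mul_pi_div_pos {N k : ℕ} (hk : k ∈ Set.Icc 1 N) : 0 < sin (k * π / (2 * N)) := by
  obtain ⟨h0, hπ⟩ := mul_pi_div_mem_Ioc hk
  exact sin_pos_of_pos_of_lt_pi h0 (by linarith [pi_pos])

lemma injOn_sin_mul_pi_div (N : ℕ) :
    Set.InjOn (fun k : ℕ => sin (k * π / (2 * N))) (Set.Icc 1 N) := by
  intro k hk l hl h
  have hmem : ∀ {m : ℕ}, m ∈ Set.Icc 1 N → m * π / (2 * N) ∈ Set.Icc (-(π / 2)) (π / 2) :=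
    fun hm => ⟨by linarith [(mul_pi_div_mem_Ioc hm).1, pi_pos], (mul_pi_div_mem_Ioc hm).2⟩
  have := injOn_sin (hmem hk) (hmem hl) h
  have hN : (N : ℝ) ≠ 0 := by have := hk.1.trans hk.2; positivity
  field_simp at this
  exact_mod_cast this

instance (N : ℕ) : Finite (chordLengths N) := ((Set.finite_Icc 1 N).image _).to_subtype

lemma chordLengths_nonempty {N : ℕ} (hN : 1 ≤ N) : (chordLengths N).Nonempty :=
  ⟨_, 1, ⟨le_rfl, hN⟩, rfl⟩

lemma chordLengths_pos {N : ℕ} {x : ℝ} (hx : x ∈ chordLengths N) : 0 < x := by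
  obtain ⟨k, hk, rfl⟩ := hx
  exact mul_pos two_pos (sin_mul_pi_div_pos hk)

lemma ncard_chordLengths (N : ℕ) : (chordLengths N).ncard = N := by
  rw [chordLengths, Set.InjOn.ncard_image fun k hk l hl h =>
    injOn_sin_mul_pi_div N hk hl (by simpa using h), ← Finset.coe_Icc, Set.ncard_coe_finset,
    Nat.card_Icc, Nat.add_sub_cancel]

lemma injOn_div_offDiag_chordLengths {n N : ℕ} (hN : N = 2 ^ n) :
    (chordLengths N).offDiag.InjOn fun x => x.1 / x.2 := by
  rintro ⟨_, _⟩ ⟨⟨a, ha, rfl⟩, ⟨b, hb, rfl⟩, hab⟩ ⟨_, _⟩ ⟨⟨a', ha', rfl⟩, ⟨b', hb', rfl⟩, -⟩ h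
  have hsin := (div_eq_div_iff (mul_pos two_pos (sin_mul_pi_div_pos hb)).ne'
    (mul_pos two_pos (sin_mul_pi_div_pos hb')).ne').1 h
  rcases eq_and_eq_or_of_sin_mul_sin_eq hN ha hb ha' hb' (by linarith) with
    ⟨rfl, rfl⟩ | ⟨rfl, -⟩
  · rfl
  · exact absurd rfl hab

def ScaledOrSwapped {S : Set ℝ} (p q : S × S × S) : Prop :=
  ∃ c : ℝ, 0 < c ∧
    (((q.1 : ℝ) = c * (p.1 : ℝ) ∧ (q.2.1 : ℝ) = c * (p.2.1 : ℝ) ∧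
        (q.2.2 : ℝ) = c * (p.2.2 : ℝ)) ∨
     ((q.1 : ℝ) = c * (p.2.1 : ℝ) ∧ (q.2.1 : ℝ) = c * (p.1 : ℝ) ∧
        (q.2.2 : ℝ) = c * (p.2.2 : ℝ)))

open Classical in
noncomputable def scaleSwapClass {α : Type*} (p : α × α × α) : Option (Sym2 α × α) :=
  if p.1 = p.2.1 ∧ p.2.1 = p.2.2 then none else some (s(p.1, p.2.1), p.2.2)

lemma eq_one_of_mul_mem {S : Set ℝ} (hpos : ∀ x ∈ S, 0 < x)
    (hS : S.offDiag.InjOn fun x => x.1 / x.2) {u v c : ℝ} (hu : u ∈ S) (hv : v ∈ S) (huv : u ≠ v)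
    (hcu : c * u ∈ S) (hcv : c * v ∈ S) : c = 1 := by
  have hu0 := (hpos u hu).ne'
  have hc0 : c ≠ 0 := left_ne_zero_of_mul (hpos _ hcu).ne'
  have := hS (x₁ := (c * u, c * v)) (x₂ := (u, v))
    ⟨hcu, hcv, fun h => huv (mul_left_cancel₀ hc0 h)⟩ ⟨hu, hv, huv⟩
    (by simp only; rw [mul_div_mul_left _ _ hc0])
  have hcu : c * u = u := congrArg Prod.fst this
  rwa [mul_eq_right₀ hu0] at hcu

lemma scaledOrSwapped_iff {S : Set ℝ} (hpos : ∀ x ∈ S, 0 < x)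
    (hS : S.offDiag.InjOn fun x => x.1 / x.2) {p q : S × S × S} :
    ScaledOrSwapped p q ↔ scaleSwapClass p = scaleSwapClass q := by
  obtain ⟨⟨x, hx⟩, ⟨y, hy⟩, ⟨z, hz⟩⟩ := p
  obtain ⟨⟨x', hx'⟩, ⟨y', hy'⟩, ⟨z', hz'⟩⟩ := q
  simp only [ScaledOrSwapped, scaleSwapClass, Subtype.mk.injEq]
  constructor
  · rintro ⟨c, -, hq⟩
    have hmem : c * x ∈ S ∧ c * y ∈ S ∧ c * z ∈ S := by
      rcases hq with ⟨rfl, rfl, rfl⟩ | ⟨rfl, rfl, rfl⟩ <;> exact ⟨‹_›, ‹_›, ‹_›⟩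
    by_cases hconst : x = y ∧ y = z
    · obtain ⟨rfl, rfl⟩ := hconst
      rcases hq with ⟨rfl, rfl, rfl⟩ | ⟨rfl, rfl, rfl⟩ <;> simp
    · have hc1 : c = 1 := by
        by_cases hxy : x = y
        · exact eq_one_of_mul_mem hpos hS hy hz (fun h => hconst ⟨hxy, h⟩) hmem.2.1 hmem.2.2
        · exact eq_one_of_mul_mem hpos hS hx hy hxy hmem.1 hmem.2.1
      subst hc1
      rcases hq with ⟨rfl, rfl, rfl⟩ | ⟨rfl, rfl, rfl⟩
      · simp only [one_mul]
      · simp only [one_mul, if_neg hconst]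
        rw [if_neg (by rintro ⟨rfl, rfl⟩; exact hconst ⟨rfl, rfl⟩), Sym2.eq_swap]
  · intro h
    split_ifs at h with hconst hconst' hconst'
    · obtain ⟨rfl, rfl⟩ := hconst
      obtain ⟨rfl, rfl⟩ := hconst'
      refine ⟨x' / x, div_pos (hpos _ hx') (hpos _ hx), Or.inl ?_⟩
      simp [div_mul_cancel₀ _ (hpos _ hx).ne']
    · simp only [Option.some.injEq, Prod.mk.injEq, Sym2.eq_iff, Subtype.mk.injEq] at h
      refine ⟨1, one_pos, ?_⟩
      rcases h with ⟨⟨rfl, rfl⟩ | ⟨rfl, rfl⟩, rfl⟩ <;> simp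

lemma range_scaleSwapClass {α : Type*} [Nonempty α] :
    Set.range (scaleSwapClass (α := α))
      = insert none (some '' (Set.range fun a : α => (Sym2.diag a, a))ᶜ) := by
  ext (_ | ⟨z, d⟩)
  · simp [scaleSwapClass]
  · simp only [Set.mem_range, scaleSwapClass, Set.mem_insert_iff, reduceCtorEq, false_or,
      Set.mem_image, Set.mem_compl_iff, Option.some.injEq, exists_eq_right, Prod.mk.injEq,
      not_exists, not_and]
    constructor
    · rintro ⟨⟨x, y, w⟩, h⟩ a rfl rfl
      split_ifs at h with hconst
      simp only [Option.some.injEq, Prod.mk.injEq, Sym2.diag, Sym2.eq_iff] at h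
      rcases h with ⟨⟨rfl, rfl⟩ | ⟨rfl, rfl⟩, rfl⟩ <;> simp at hconst
    · induction z using Sym2.ind with
      | h x y =>
      intro h
      refine ⟨(x, y, d), if_neg ?_⟩
      dsimp only
      rintro ⟨rfl, rfl⟩
      exact h x rfl rfl

lemma card_range_scaleSwapClass {α : Type*} [Finite α] [Nonempty α] :
    Nat.card (Set.range (scaleSwapClass (α := α)))
      = Nat.card α * Nat.card (Sym2 α) - Nat.card α + 1 := by
  rw [range_scaleSwapClass, Nat.card_coe_set_eq, Set.ncard_insert_of_notMem (by simp),
    Set.ncard_image_of_injective _ (Option.some_injective _), Set.ncard_compl,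
    Set.ncard_range_of_injective (fun a b h => congrArg Prod.snd h), Nat.card_prod, mul_comm]

lemma mul_choose_two_sub_add_one {N : ℕ} (hN : 1 ≤ N) :
    N * (N + 1).choose 2 - N + 1
      = ((2 * N) ^ 3 + 2 * (2 * N) ^ 2 - 8 * (2 * N) + 16) / 16 := by
  have hC : 2 * (N + 1).choose 2 = N * (N + 1) := by
    rw [Nat.choose_two_right, Nat.add_sub_cancel, mul_comm (N + 1)]
    exact Nat.two_mul_div_two_of_even (Nat.even_mul_succ_self N)
  have hcube : (2 * N) ^ 3 + 2 * (2 * N) ^ 2 = 16 * (N * (N + 1).choose 2) := by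
    calc _ = 8 * N * (N * (N + 1)) := by ring
      _ = _ := by rw [← hC]; ring
  have hle : N ≤ N * (N + 1).choose 2 := Nat.le_mul_of_pos_right N (Nat.choose_pos (by omega))
  rw [hcube]
  omega

theorem card_classes_triples (lam : ℕ) (hlam : 1 ≤ lam) (M : ℕ) (hM : M = 2 ^ lam)
    (Rset : Set ℝ)
    (hRset : Rset = {r : ℝ | ∃ k : ℕ, 1 ≤ k ∧ k ≤ M / 2 ∧ r = 2 * Real.sin (k * Real.pi / M)})
    (rel : Rset × Rset × Rset → Rset × Rset × Rset → Prop)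
    (hrel : ∀ p q : Rset × Rset × Rset, rel p q ↔ ∃ c : ℝ, 0 < c ∧
      (((q.1 : ℝ) = c * (p.1 : ℝ) ∧ (q.2.1 : ℝ) = c * (p.2.1 : ℝ) ∧
          (q.2.2 : ℝ) = c * (p.2.2 : ℝ)) ∨
       ((q.1 : ℝ) = c * (p.2.1 : ℝ) ∧ (q.2.1 : ℝ) = c * (p.1 : ℝ) ∧
          (q.2.2 : ℝ) = c * (p.2.2 : ℝ)))) :
    Equivalence rel ∧ Nat.card (Quot rel) = (M ^ 3 + 2 * M ^ 2 - 8 * M + 16) / 16 := by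
  obtain ⟨n, rfl⟩ : ∃ n, lam = n + 1 := ⟨lam - 1, by omega⟩
  obtain rfl : Rset = chordLengths (2 ^ n) := by
    ext r
    have hhalf : 2 ^ (n + 1) / 2 = 2 ^ n := by rw [pow_succ, Nat.mul_div_cancel _ two_pos]
    have hcast : ((2 ^ (n + 1) : ℕ) : ℝ) = 2 * ((2 ^ n : ℕ) : ℝ) := by push_cast; ring
    simp only [hRset, hM, hhalf, hcast, chordLengths, Set.mem_ofPred_eq, Set.mem_image,
      Set.mem_Icc]
    exact ⟨fun ⟨k, h1, h2, h3⟩ => ⟨k, ⟨h1, h2⟩, h3.symm⟩,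
      fun ⟨k, ⟨h1, h2⟩, h3⟩ => ⟨k, h1, h2, h3.symm⟩⟩
  have hker : rel = (Setoid.ker scaleSwapClass).r := by
    ext p q
    rw [hrel]
    exact scaledOrSwapped_iff (fun _ => chordLengths_pos) (injOn_div_offDiag_chordLengths rfl)
  subst hker hM
  refine ⟨(Setoid.ker scaleSwapClass).iseqv, ?_⟩
  have : Nonempty (chordLengths (2 ^ n)) := (chordLengths_nonempty Nat.one_le_two_pow).to_subtype
  change Nat.card (Quotient (Setoid.ker scaleSwapClass)) = _
  rw [Nat.card_congr (Setoid.quotientKerEquivRange _), card_range_scaleSwapClass, Sym2.natCard,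
    Nat.card_coe_set_eq, ncard_chordLengths, pow_succ' 2 n]
  exact mul_choose_two_sub_add_one Nat.one_le_two_pow
end
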